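/- Let A be an n×n lower triangular matrix with pieces C_k as above and diagonal entries x_k. Then A² = I + ∑_{k=1}^n (1 + x_k) C_k + ∑_{1 ≤ j < k ≤ n} a_{k,j} C_k L^{k−j}. -/
import Mathlib


/-- The elementary factor `E_k` of `A`. -/
def elemFactor {n : ℕ} (A : Matrix (Fin n) (Fin n) ℂ) (k : Fin n) :
    Matrix (Fin n) (Fin n) ℂ :=
  Matrix.of fun i j => if j = k then A i j else if i = j then 1 else 0

/-- `C_k = E_k - I`. -/
def Ck {n : ℕ} (A : Matrix (Fin n) (Fin n) ℂ) (k : Fin n) :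
    Matrix (Fin n) (Fin n) ℂ :=
  elemFactor A k - 1

/-- The lower shift matrix `L`, with `L_{k+1,k} = 1`. -/
def shiftL (n : ℕ) : Matrix (Fin n) (Fin n) ℂ :=
  Matrix.of fun i j => if (i : ℕ) = (j : ℕ) + 1 then 1 else 0

lemma Ck_apply {n : ℕ} (A : Matrix (Fin n) (Fin n) ℂ) (k i j : Fin n) :
    Ck A k i j = if j = k then A i k - (if i = k then 1 else 0) else 0 := by
  simp only [Ck, elemFactor, Matrix.sub_apply, Matrix.one_apply, Matrix.of_apply]
  split_ifs <;> simp_all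

lemma shiftL_pow_apply {n : ℕ} (m : ℕ) (i j : Fin n) :
    (shiftL n ^ m) i j = if (i : ℕ) = (j : ℕ) + m then 1 else 0 := by
  induction m generalizing j with
  | zero => simp [Matrix.one_apply, Fin.ext_iff]
  | succ m ih =>
    rw [pow_succ, Matrix.mul_apply]
    by_cases h : (j : ℕ) + 1 < n
    · rw [Finset.sum_eq_single (⟨(j:ℕ)+1, h⟩ : Fin n)]
      · rw [ih]
        simp only [shiftL, Matrix.of_apply, Fin.val_mk]
        rw [if_pos trivial, mul_one]
        have : (j : ℕ) + 1 + m = (j : ℕ) + (m + 1) := by omega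
        rw [this]
      · intro b _ hb
        simp only [shiftL, Matrix.of_apply]
        rw [if_neg, mul_zero]
        intro hb'
        exact hb (Fin.ext hb')
      · simp
    · have : ∀ b : Fin n, (shiftL n ^ m) i b * shiftL n b j = 0 := by
        intro b
        simp only [shiftL, Matrix.of_apply]
        rw [if_neg, mul_zero]
        omega
      have hi := i.isLt
      rw [Finset.sum_eq_zero (fun b _ => this b), eq_comm, if_neg (by omega)]

lemma CkL_apply {n : ℕ} (A : Matrix (Fin n) (Fin n) ℂ) (k i j : Fin n) (m : ℕ) :
    (Ck A k * shiftL n ^ m) i j =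
      if (k : ℕ) = (j : ℕ) + m then A i k - (if i = k then 1 else 0) else 0 := by
  rw [Matrix.mul_apply, Finset.sum_eq_single k]
  · rw [Ck_apply, if_pos rfl, shiftL_pow_apply]
    split_ifs <;> simp
  · intro b _ hb; rw [Ck_apply, if_neg hb, zero_mul]
  · simp

theorem stmt12 {n : ℕ} (A : Matrix (Fin n) (Fin n) ℂ)
    (hlow : ∀ i j : Fin n, i < j → A i j = 0) :
    A ^ 2 = 1 + ∑ k : Fin n, (1 + A k k) • Ck A k +
      ∑ p ∈ Finset.univ.filter (fun p : Fin n × Fin n => p.2 < p.1),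
        A p.1 p.2 • (Ck A p.1 * shiftL n ^ ((p.1 : ℕ) - (p.2 : ℕ))) := by
  ext i j
  have hL : (A ^ 2) i j = ∑ k, A i k * A k j := by
    rw [pow_two, Matrix.mul_apply]
  have h1 : (∑ k : Fin n, (1 + A k k) • Ck A k) i j
      = (1 + A j j) * (A i j - if i = j then 1 else 0) := by
    rw [Matrix.sum_apply]
    simp only [Matrix.smul_apply, Ck_apply, smul_eq_mul, mul_ite, mul_zero]
    rw [Finset.sum_ite_eq]
    simp
  have h2 : (∑ p ∈ Finset.univ.filter (fun p : Fin n × Fin n => p.2 < p.1),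
        A p.1 p.2 • (Ck A p.1 * shiftL n ^ ((p.1 : ℕ) - (p.2 : ℕ)))) i j
      = ∑ k : Fin n, (if j < k then A k j * (A i k - if i = k then 1 else 0) else 0) := by
    rw [Matrix.sum_apply, Finset.sum_filter, Fintype.sum_prod_type]
    refine Finset.sum_congr rfl fun k _ => ?_
    have key : ∀ l : Fin n,
        (if l < k then (A k l • (Ck A k * shiftL n ^ ((k : ℕ) - (l : ℕ)))) i j else 0)
          = if l = j then (if j < k then A k j * (A i k - if i = k then 1 else 0) else 0)
            else 0 := by
      intro l
      rw [Matrix.smul_apply, CkL_apply, smul_eq_mul]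
      by_cases hl : l = j
      · rw [hl]
        by_cases hj : j < k
        · rw [if_pos hj, if_pos rfl, if_pos hj,
            if_pos (show (k : ℕ) = (j : ℕ) + ((k : ℕ) - (j : ℕ)) by
              have := Fin.lt_def.mp hj; omega)]
        · rw [if_neg hj, if_pos rfl, if_neg hj]
      · rw [if_neg hl]
        by_cases h1 : l < k
        · rw [if_pos h1, if_neg (show ¬ (k : ℕ) = (j : ℕ) + ((k : ℕ) - (l : ℕ)) by
            intro hc
            have hlk := Fin.lt_def.mp h1
            exact hl (Fin.ext (by omega))), mul_zero]
        · rw [if_neg h1]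
    rw [Finset.sum_congr rfl fun l _ => key l, Finset.sum_ite_eq']
    simp
  rw [hL, Matrix.add_apply, Matrix.add_apply, Matrix.one_apply, h1, h2]
  have hsplit : ∀ k : Fin n, A i k * A k j =
      (if j < k then A k j * A i k else 0) + (if k = j then A i j * A j j else 0) := by
    intro k
    rcases lt_trichotomy k j with h | h | h
    · rw [hlow k j h, mul_zero, if_neg (asymm h), if_neg h.ne, add_zero]
    · subst h; simp
    · rw [if_pos h, if_neg h.ne', add_zero, mul_comm]
  have hsum2 : ∀ k : Fin n,
      (if j < k then A k j * (A i k - if i = k then 1 else 0) else 0)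
        = (if j < k then A k j * A i k else 0)
          - (if k = i then (if j < i then A i j else 0) else 0) := by
    intro k
    by_cases hk : k = i
    · subst hk
      by_cases hj : j < k
      · rw [if_pos hj, if_pos hj, if_pos rfl, if_pos hj, if_pos rfl]; ring
      · rw [if_neg hj, if_neg hj, if_pos rfl, if_neg hj, sub_zero]
    · by_cases hj : j < k
      · rw [if_pos hj, if_pos hj, if_neg (fun h => hk h.symm), if_neg hk]; ring
      · rw [if_neg hj, if_neg hj, if_neg hk, sub_zero]
    
  rw [Finset.sum_congr rfl fun k _ => hsplit k, Finset.sum_add_distrib,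
    Finset.sum_congr rfl fun k _ => hsum2 k, Finset.sum_sub_distrib,
    Finset.sum_ite_eq' Finset.univ j (fun _ => A i j * A j j),
    Finset.sum_ite_eq' Finset.univ i (fun _ => if j < i then A i j else 0)]
  simp only [Finset.mem_univ, if_true]
  rcases lt_trichotomy i j with h | h | h
  · rw [hlow i j h, if_neg h.ne, if_neg (asymm h)]; ring
  · subst h; rw [if_pos rfl, if_neg (lt_irrefl _)]; ring
  · rw [if_neg h.ne', if_pos h]; ring
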